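/- Let q be a real number with 0 < q < 1 and let x be a complex number with x ≠ 0, |x| < 1/(1−q), cos_q(x) ≠ 0 and cos_q(qx) ≠ 0. Then the Jackson q-derivative of tan_q at x satisfies (tan_q(x) − tan_q(qx))/((1−q)x) = 1 + tan_q(x)·tan_q(qx), where tan_q(z) = sin_q(z)/cos_q(z). -/

import Mathlib

open Filter Topology

/-- The `q`-basic number `[n]_q = (1 - q^n)/(1 - q)`. -/
noncomputable def qNum (q : ℝ) (n : ℕ) : ℝ := (1 - q ^ n) / (1 - q)

/-- The `q`-factorial `[n]_q! = [1]_q [2]_q ⋯ [n]_q`, with `[0]_q! = 1`. -/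
noncomputable def qFact (q : ℝ) (n : ℕ) : ℝ := ∏ j ∈ Finset.range n, qNum q (j + 1)

/-- The Gaussian binomial coefficient `[n]_q! / ([k]_q! [n-k]_q!)`. -/
noncomputable def qBinom (q : ℝ) (n k : ℕ) : ℝ := qFact q n / (qFact q k * qFact q (n - k))

/-- The `q`-exponential `e_q(z) = ∑ z^n / [n]_q!`. -/
noncomputable def qExp (q : ℝ) (z : ℂ) : ℂ := ∑' n : ℕ, z ^ n / (qFact q n : ℂ)

/-- The `q`-sine `sin_q(z) = ∑ (-1)^n z^(2n+1) / [2n+1]_q!`. -/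
noncomputable def qSin (q : ℝ) (z : ℂ) : ℂ :=
  ∑' n : ℕ, (-1 : ℂ) ^ n * z ^ (2 * n + 1) / (qFact q (2 * n + 1) : ℂ)

/-- The `q`-cosine `cos_q(z) = ∑ (-1)^n z^(2n) / [2n]_q!`. -/
noncomputable def qCos (q : ℝ) (z : ℂ) : ℂ :=
  ∑' n : ℕ, (-1 : ℂ) ^ n * z ^ (2 * n) / (qFact q (2 * n) : ℂ)

/-- The `q`-addition power `(x ⊕_q y)^n = ∑_{k=0}^n binom_q(n,k) x^k y^(n-k)`. -/
noncomputable def qAddPow (q : ℝ) (x y : ℂ) (n : ℕ) : ℂ :=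
  ∑ k ∈ Finset.range (n + 1), (qBinom q n k : ℂ) * x ^ k * y ^ (n - k)

/-- The `q`-subtraction power `(x ⊖_q y)^n = ∑_{k=0}^n binom_q(n,k) (-1)^(n-k) x^k y^(n-k)`. -/
noncomputable def qSubPow (q : ℝ) (x y : ℂ) (n : ℕ) : ℂ :=
  ∑ k ∈ Finset.range (n + 1), (qBinom q n k : ℂ) * (-1 : ℂ) ^ (n - k) * x ^ k * y ^ (n - k)

/-- The `q`-tangent `tan_q(z) = sin_q(z)/cos_q(z)`. -/
noncomputable def qTan (q : ℝ) (z : ℂ) : ℂ := qSin q z / qCos q z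

/-- The second `q`-exponential `E_q(z) = ∑ q^(n(n-1)/2) z^n / [n]_q!`. -/
noncomputable def qExpE (q : ℝ) (z : ℂ) : ℂ :=
  ∑' n : ℕ, (q : ℂ) ^ (n * (n - 1) / 2) * z ^ n / (qFact q n : ℂ)

/-! Termwise, `D_q` sends `z^(n+1)/[n+1]_q!` to `z^n/[n]_q!`, so on the disc of convergence
`D_q sin_q = cos_q` and `D_q cos_q = -sin_q`. With `h = (1-q)x` this reads
`sin_q(qx) = sin_q x - h cos_q x` and `cos_q(qx) = cos_q x + h sin_q x`, and then both sides of
the identity equal `(sin_q² x + cos_q² x) / (cos_q x · cos_q(qx))`. -/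

variable {q : ℝ}

lemma qNum_pos (hq0 : 0 ≤ q) (hq1 : q < 1) {n : ℕ} (hn : n ≠ 0) : 0 < qNum q n :=
  div_pos (sub_pos.2 (pow_lt_one₀ hq0 hq1 hn)) (sub_pos.2 hq1)

lemma qFact_succ (n : ℕ) : qFact q (n + 1) = qFact q n * qNum q (n + 1) :=
  Finset.prod_range_succ _ _

lemma qFact_pos (hq0 : 0 ≤ q) (hq1 : q < 1) (n : ℕ) : 0 < qFact q n :=
  Finset.prod_pos fun j _ ↦ qNum_pos hq0 hq1 j.succ_ne_zero

lemma tendsto_qNum (hq0 : 0 ≤ q) (hq1 : q < 1) :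
    Tendsto (qNum q) atTop (𝓝 (1 / (1 - q))) := by
  unfold qNum
  simpa using ((tendsto_pow_atTop_nhds_zero_of_lt_one hq0 hq1).const_sub 1).div_const (1 - q)

lemma summable_pow_div_qFact (hq0 : 0 ≤ q) (hq1 : q < 1) {r : ℝ} (hr0 : 0 < r)
    (hr : r < 1 / (1 - q)) : Summable fun n ↦ r ^ n / qFact q n := by
  have hfact := qFact_pos hq0 hq1
  refine summable_of_ratio_test_tendsto_lt_one (l := r / (1 / (1 - q)))
    ((div_lt_one (hr0.trans hr)).2 hr)
    (.of_forall fun n ↦ (div_pos (pow_pos hr0 n) (hfact n)).ne') ?_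
  have hratio (n : ℕ) : ‖r ^ (n + 1) / qFact q (n + 1)‖ / ‖r ^ n / qFact q n‖
      = r / qNum q (n + 1) := by
    have hfact_n := hfact n
    have hnum := qNum_pos hq0 hq1 n.succ_ne_zero
    rw [Real.norm_of_nonneg (div_pos (pow_pos hr0 _) (hfact _)).le,
      Real.norm_of_nonneg (div_pos (pow_pos hr0 _) (hfact _)).le, qFact_succ]
    field_simp
    ring
  simp_rw [hratio]
  exact tendsto_const_nhds.div ((tendsto_qNum hq0 hq1).comp (tendsto_add_atTop_nat 1))
    (one_div_pos.2 (sub_pos.2 hq1)).ne'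

lemma norm_ofReal_mul_lt (hq0 : 0 ≤ q) (hq1 : q < 1) {z : ℂ} (hz : ‖z‖ < 1 / (1 - q)) :
    ‖(q : ℂ) * z‖ < 1 / (1 - q) := by
  rw [norm_mul, Complex.norm_real, Real.norm_of_nonneg hq0]
  exact (mul_le_of_le_one_left (norm_nonneg z) hq1.le).trans_lt hz

lemma summable_neg_one_pow_mul_pow_div_qFact (hq0 : 0 ≤ q) (hq1 : q < 1) {z : ℂ}
    (hz : ‖z‖ < 1 / (1 - q)) {i : ℕ → ℕ} (hi : Function.Injective i) :
    Summable fun n ↦ (-1 : ℂ) ^ n * z ^ i n / (qFact q (i n) : ℂ) := by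
  obtain ⟨r, hzr, hr⟩ := exists_between hz
  refine ((summable_pow_div_qFact hq0 hq1 ((norm_nonneg z).trans_lt hzr) hr).comp_injective
    hi).of_norm_bounded fun n ↦ ?_
  rw [norm_div, norm_mul, norm_pow, norm_pow, norm_neg, norm_one, one_pow, one_mul,
    Complex.norm_real, Real.norm_of_nonneg (qFact_pos hq0 hq1 _).le]
  exact div_le_div_of_nonneg_right (pow_le_pow_left₀ (norm_nonneg z) hzr.le _)
    (qFact_pos hq0 hq1 _).le

lemma pow_succ_sub_div_qFact (hq0 : 0 ≤ q) (hq1 : q < 1) (z : ℂ) (n : ℕ) :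
    (z ^ (n + 1) - ((q : ℂ) * z) ^ (n + 1)) / (qFact q (n + 1) : ℂ) =
      (1 - q) * z * (z ^ n / (qFact q n : ℂ)) := by
  have hfact : (qFact q n : ℂ) ≠ 0 := Complex.ofReal_ne_zero.2 (qFact_pos hq0 hq1 n).ne'
  have hnum : (qNum q (n + 1) : ℂ) ≠ 0 :=
    Complex.ofReal_ne_zero.2 (qNum_pos hq0 hq1 n.succ_ne_zero).ne'
  have h1q : (1 - q : ℂ) ≠ 0 := by exact_mod_cast (sub_pos.2 hq1).ne'
  rw [qFact_succ, Complex.ofReal_mul, div_mul_eq_div_div, div_eq_iff hnum, qNum]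
  push_cast
  field_simp
  ring

lemma qSin_sub_qSin_mul (hq0 : 0 ≤ q) (hq1 : q < 1) {z : ℂ} (hz : ‖z‖ < 1 / (1 - q)) :
    qSin q z - qSin q ((q : ℂ) * z) = (1 - q) * z * qCos q z := by
  have hodd : Function.Injective fun n : ℕ ↦ 2 * n + 1 := fun a b h ↦ by simp_all
  unfold qSin qCos
  rw [← (summable_neg_one_pow_mul_pow_div_qFact hq0 hq1 hz hodd).tsum_sub
    (summable_neg_one_pow_mul_pow_div_qFact hq0 hq1 (norm_ofReal_mul_lt hq0 hq1 hz) hodd),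
    ← tsum_mul_left]
  refine tsum_congr fun n ↦ ?_
  rw [mul_div_assoc, mul_div_assoc, ← mul_sub, ← sub_div, pow_succ_sub_div_qFact hq0 hq1]
  ring

lemma qCos_sub_qCos_mul (hq0 : 0 ≤ q) (hq1 : q < 1) {z : ℂ} (hz : ‖z‖ < 1 / (1 - q)) :
    qCos q z - qCos q ((q : ℂ) * z) = -((1 - q) * z * qSin q z) := by
  have heven : Function.Injective fun n : ℕ ↦ 2 * n := fun a b h ↦ by simp_all
  have hz' := summable_neg_one_pow_mul_pow_div_qFact hq0 hq1 hz heven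
  have hqz' := summable_neg_one_pow_mul_pow_div_qFact hq0 hq1 (norm_ofReal_mul_lt hq0 hq1 hz) heven
  unfold qCos qSin
  rw [← hz'.tsum_sub hqz', ← tsum_mul_left, ← tsum_neg, (hz'.sub hqz').tsum_eq_zero_add]
  simp only [mul_zero, pow_zero, sub_self, zero_add]
  refine tsum_congr fun n ↦ ?_
  rw [mul_div_assoc, mul_div_assoc, ← mul_sub, ← sub_div, Nat.mul_succ,
    pow_succ_sub_div_qFact hq0 hq1]
  ring

/-- Jackson q-derivative of `tan_q`: `D_q tan_q(x) = 1 + tan_q(x) tan_q(qx)`. -/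
theorem qDeriv_qTan (q : ℝ) (hq0 : 0 < q) (hq1 : q < 1) (x : ℂ) (hx0 : x ≠ 0)
    (hx : ‖x‖ < 1 / (1 - q))
    (hc1 : qCos q x ≠ 0) (hc2 : qCos q ((q : ℂ) * x) ≠ 0) :
    (qTan q x - qTan q ((q : ℂ) * x)) / ((1 - (q : ℂ)) * x) =
      1 + qTan q x * qTan q ((q : ℂ) * x) := by
  have hsin : qSin q (q * x) = qSin q x - (1 - q) * x * qCos q x := by
    linear_combination -qSin_sub_qSin_mul hq0.le hq1 hx
  have hcos : qCos q (q * x) = qCos q x + (1 - q) * x * qSin q x := by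
    linear_combination -qCos_sub_qCos_mul hq0.le hq1 hx
  have h1q : (1 - q : ℂ) ≠ 0 := sub_ne_zero.2 (Complex.ofReal_ne_one.2 hq1.ne).symm
  rw [qTan, qTan]
  field_simp
  rw [hsin, hcos]
  ring
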